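/- Let μ > 0 and 0 < d < 1/2, and define r₀ = (1/2 + d)√(μ/d). Then 2√(μd) ≤ r₀ ≤ √(μ/d), and for the optimal relaxation variable z*(r) (equal to 0 for |r| ≤ 2√(μd), to (|r|√(d/μ) − 2d)/(1 − 2d) for 2√(μd) ≤ |r| ≤ √(μ/d), and to 1 for |r| ≥ √(μ/d)) one has z*(r) = 1/2 if and only if |r| = r₀. Moreover, the map s ↦ φ̄(s; d) is strictly increasing on [0, √(μ/d)], and φ̄(r₀; d) = μ(3/4 − d − d²)/(1 − 2d). -/

import Mathlib

/-!
Write `b = √(μ/d)`. Then `√(μd) = d b`, `√(d/μ) = b⁻¹` and `μ = d b²`, so every claim becomes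
an identity or inequality between polynomials in `b` and `d`. The middle branch of `φ̄` is the
concave quadratic `(-d r² + 2 d b r - 2 d² b²)/(1 - 2d)` with vertex at `r = b`; it agrees with
`r²/2` at `r = 2db` and with `μ` at `r = b`, so `φ̄` increases on `[0, 2db]` and on `[2db, b]`.
-/

/-- The perspective-relaxation loss φ̄(r; d) for parameters μ > 0, d ∈ (0,1/2). -/
noncomputable def phiBar (mu d r : ℝ) : ℝ :=
  if |r| ≤ 2 * Real.sqrt (mu * d) then (1/2) * r^2
  else if |r| < Real.sqrt (mu / d) then
    (-(d * r^2) + 2 * Real.sqrt (mu * d) * |r| - 2 * mu * d) / (1 - 2*d)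
  else mu

/-- The optimal relaxation variable z*(r). -/
noncomputable def zstar (mu d r : ℝ) : ℝ :=
  if |r| ≤ 2 * Real.sqrt (mu * d) then 0
  else if |r| ≤ Real.sqrt (mu / d) then
    (|r| * Real.sqrt (d / mu) - 2*d) / (1 - 2*d)
  else 1

open Real Set

section
variable {mu d : ℝ}

lemma sqrt_mul_eq_mul_sqrt_div (hd : 0 < d) : √(mu * d) = d * √(mu / d) := by
  rw [show mu * d = d ^ 2 * (mu / d) by field_simp, sqrt_mul (sq_nonneg d), sqrt_sq hd.le]

lemma sqrt_div_eq_inv_sqrt_div (mu d : ℝ) : √(d / mu) = (√(mu / d))⁻¹ := by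
  rw [← sqrt_inv, inv_div]

lemma mul_sq_sqrt_div (hmu : 0 ≤ mu) (hd : 0 < d) : d * √(mu / d) ^ 2 = mu := by
  rw [sq_sqrt (div_nonneg hmu hd.le)]
  field_simp

lemma two_sqrt_mul_lt_threshold_lt_sqrt_div (hmu : 0 < mu) (hd0 : 0 < d) (hd : d < 1 / 2) :
    2 * √(mu * d) < (1 / 2 + d) * √(mu / d) ∧ (1 / 2 + d) * √(mu / d) < √(mu / d) := by
  have hb : 0 < √(mu / d) := sqrt_pos.mpr (div_pos hmu hd0)
  rw [sqrt_mul_eq_mul_sqrt_div hd0]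
  constructor <;> nlinarith

lemma zstar_eq_half_iff (hmu : 0 < mu) (hd0 : 0 < d) (hd : d < 1 / 2) (r : ℝ) :
    zstar mu d r = 1 / 2 ↔ |r| = (1 / 2 + d) * √(mu / d) := by
  obtain ⟨hlow, hhigh⟩ := two_sqrt_mul_lt_threshold_lt_sqrt_div hmu hd0 hd
  have hb : 0 < √(mu / d) := sqrt_pos.mpr (div_pos hmu hd0)
  have hd' : 0 < 1 - 2 * d := by linarith
  unfold zstar
  split_ifs with h1 h2
  · constructor <;> intro h <;> [norm_num at h; linarith]
  · rw [sqrt_div_eq_inv_sqrt_div, div_eq_iff hd'.ne', ← div_eq_mul_inv,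
      sub_eq_iff_eq_add, div_eq_iff hb.ne']
    constructor <;> intro h <;> linarith
  · constructor <;> intro h <;> [norm_num at h; linarith]

lemma phiBar_of_abs_le {r : ℝ} (h : |r| ≤ 2 * √(mu * d)) : phiBar mu d r = 1 / 2 * r ^ 2 :=
  if_pos h

lemma phiBar_of_abs_mem_Icc (hmu : 0 ≤ mu) (hd0 : 0 < d) (hd : d < 1 / 2) {r : ℝ}
    (h : |r| ∈ Icc (2 * √(mu * d)) √(mu / d)) :
    phiBar mu d r = (-(d * r ^ 2) + 2 * √(mu * d) * |r| - 2 * mu * d) / (1 - 2 * d) := by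
  have hd' : 1 - 2 * d ≠ 0 := by linarith
  have hmu_eq := mul_sq_sqrt_div hmu hd0
  unfold phiBar
  split_ifs with h1 h2
  · rw [← sq_abs r, show |r| = 2 * √(mu * d) by linarith [h.1], sqrt_mul_eq_mul_sqrt_div hd0,
      eq_div_iff hd']
    linear_combination (-2 * d) * hmu_eq
  · rfl
  · rw [← sq_abs r, show |r| = √(mu / d) by linarith [h.2], sqrt_mul_eq_mul_sqrt_div hd0,
      eq_div_iff hd']
    linear_combination -hmu_eq

lemma phiBar_strictMonoOn (hmu : 0 < mu) (hd0 : 0 < d) (hd : d < 1 / 2) :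
    StrictMonoOn (phiBar mu d) (Icc 0 √(mu / d)) := by
  have hb : 0 < √(mu / d) := sqrt_pos.mpr (div_pos hmu hd0)
  have hd' : 0 < 1 - 2 * d := by linarith
  have hc : 0 ≤ 2 * √(mu * d) := by positivity
  have hcb : 2 * √(mu * d) ≤ √(mu / d) := by rw [sqrt_mul_eq_mul_sqrt_div hd0]; nlinarith
  rw [← Icc_union_Icc_eq_Icc hc hcb]
  refine StrictMonoOn.union ?quadratic ?concave (isGreatest_Icc hc) (isLeast_Icc hcb)
  case quadratic =>
    intro x hx y hy hxy
    rw [phiBar_of_abs_le (by rw [abs_of_nonneg hx.1]; exact hx.2),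
      phiBar_of_abs_le (by rw [abs_of_nonneg hy.1]; exact hy.2)]
    nlinarith [hx.1]
  case concave =>
    intro x hx y hy hxy
    have hx0 : 0 ≤ x := hc.trans hx.1
    have hy0 : 0 ≤ y := hc.trans hy.1
    rw [phiBar_of_abs_mem_Icc hmu.le hd0 hd (by rwa [abs_of_nonneg hx0]),
      phiBar_of_abs_mem_Icc hmu.le hd0 hd (by rwa [abs_of_nonneg hy0]),
      abs_of_nonneg hx0, abs_of_nonneg hy0, div_lt_div_iff_of_pos_right hd',
      sqrt_mul_eq_mul_sqrt_div hd0]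
    -- the difference is `d (y - x) (2b - x - y)`, positive below the vertex `b`
    nlinarith [mul_pos hd0 (mul_pos (sub_pos.mpr hxy) (by linarith [hx.2, hy.2] :
      0 < 2 * √(mu / d) - x - y))]

lemma phiBar_threshold (hmu : 0 < mu) (hd0 : 0 < d) (hd : d < 1 / 2) :
    phiBar mu d ((1 / 2 + d) * √(mu / d)) = mu * (3 / 4 - d - d ^ 2) / (1 - 2 * d) := by
  obtain ⟨hlow, hhigh⟩ := two_sqrt_mul_lt_threshold_lt_sqrt_div hmu hd0 hd
  have hb : 0 < √(mu / d) := sqrt_pos.mpr (div_pos hmu hd0)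
  have habs : |(1 / 2 + d) * √(mu / d)| = (1 / 2 + d) * √(mu / d) := abs_of_pos (by positivity)
  rw [phiBar_of_abs_mem_Icc hmu.le hd0 hd (by rw [habs]; exact ⟨hlow.le, hhigh.le⟩), habs,
    sqrt_mul_eq_mul_sqrt_div hd0]
  congr 1
  linear_combination (3 / 4 + d - d ^ 2) * mul_sq_sqrt_div hmu.le hd0

end

theorem stmt_18 (mu d : ℝ) (hmu : 0 < mu) (hd0 : 0 < d) (hd : d < 1/2)
    (r0 : ℝ) (hr0 : r0 = (1/2 + d) * Real.sqrt (mu / d)) :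
    (2 * Real.sqrt (mu * d) ≤ r0 ∧ r0 ≤ Real.sqrt (mu / d)) ∧
    (∀ r : ℝ, zstar mu d r = 1/2 ↔ |r| = r0) ∧
    StrictMonoOn (fun s => phiBar mu d s) (Set.Icc 0 (Real.sqrt (mu / d))) ∧
    phiBar mu d r0 = mu * (3/4 - d - d^2) / (1 - 2*d) := by
  subst hr0
  obtain ⟨hlow, hhigh⟩ := two_sqrt_mul_lt_threshold_lt_sqrt_div hmu hd0 hd
  exact ⟨⟨hlow.le, hhigh.le⟩, zstar_eq_half_iff hmu hd0 hd, phiBar_strictMonoOn hmu hd0 hd,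
    phiBar_threshold hmu hd0 hd⟩
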